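/- The generalized power cone P^α_{m,n} (m ≥ 1, n ≥ 2, α ∈ (0,1)^n with ∑ αᵢ = 1) is irreducible: it cannot be written as K₁ + K₂ with K₁, K₂ ≠ {0} subsets of P^α_{m,n} and span(K₁) ∩ span(K₂) = {0}. -/

import Mathlib

open Finset

noncomputable section

abbrev E (m n : ℕ) : Type := WithLp 2 (EuclideanSpace ℝ (Fin m) × EuclideanSpace ℝ (Fin n))

def PowCone (m n : ℕ) (α : Fin n → ℝ) : Set (E m n) :=
  {x | (∀ i, 0 ≤ x.ofLp.2 i) ∧ ‖x.ofLp.1‖ ≤ ∏ i, x.ofLp.2 i ^ α i}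

/-
In a direct decomposition `K = K₁ + K₂` every extreme ray of `K` lies in `K₁` or in `K₂`, and
for the power cone the rays through `eᵢ = (0, δᵢ)` (`unitVec`) are extreme since `n ≥ 2`.
For `x ∈ K` the reflection `(-x̄, x̃)` lies in `K` as well, and `x + (-x̄, x̃) = 2 (0, x̃)`
splits along the `eᵢ`. By uniqueness of decompositions, if some `eⱼ` is not in `span K₁`, every
`a ∈ K₁` has `ãⱼ = 0`, hence `ā = 0`. So if the `eᵢ` are shared out between the summands, all
of `K` has `x̄ = 0`, which fails for `m ≥ 1`; if they all lie in `span K₁`, every `b ∈ K₂` is a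
point `(0, b̃)` of `span K₁ ∩ span K₂`, so `K₂ = {0}`.
-/

open Submodule Pointwise

structure IsDirectDecomposition (R : Type*) {V : Type*} [Semiring R] [AddCommMonoid V]
    [Module R V] (K K₁ K₂ : Set V) : Prop where
  left_subset : K₁ ⊆ K
  right_subset : K₂ ⊆ K
  eq_add : K = K₁ + K₂
  disjoint_span : Disjoint (span R K₁) (span R K₂)

namespace IsDirectDecomposition

variable {R V : Type*} [Ring R] [AddCommGroup V] [Module R V] {K K₁ K₂ : Set V}

theorem symm (hD : IsDirectDecomposition R K K₁ K₂) : IsDirectDecomposition R K K₂ K₁ :=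
  ⟨hD.right_subset, hD.left_subset, hD.eq_add.trans (add_comm _ _), hD.disjoint_span.symm⟩

theorem exists_add_eq (hD : IsDirectDecomposition R K K₁ K₂) {x : V} (hx : x ∈ K) :
    ∃ a ∈ K₁, ∃ b ∈ K₂, a + b = x := by
  rwa [hD.eq_add, Set.mem_add] at hx

theorem left_eq_of_add_eq_add (hD : IsDirectDecomposition R K K₁ K₂) {a a' b b' : V}
    (ha : a ∈ span R K₁) (ha' : a' ∈ span R K₁) (hb : b ∈ span R K₂) (hb' : b' ∈ span R K₂)
    (h : a + b = a' + b') : a = a' := by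
  refine sub_eq_zero.1 (Submodule.disjoint_iff_add_eq_zero.1 hD.disjoint_span (sub_mem ha ha')
    (sub_mem hb hb') ?_).1
  rw [sub_add_sub_comm, h, sub_self]

theorem mem_span_left_or_mem_right {𝕜 : Type*} [DivisionRing 𝕜] [Module 𝕜 V]
    (hD : IsDirectDecomposition 𝕜 K K₁ K₂) {x : V} (hx : x ∈ K)
    (hext : ∀ u ∈ K, ∀ v ∈ K, u + v = x → u ∈ 𝕜 ∙ x) : x ∈ span 𝕜 K₁ ∨ x ∈ K₂ := by
  obtain ⟨a, ha, b, hb, rfl⟩ := hD.exists_add_eq hx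
  obtain ⟨t, ht⟩ := mem_span_singleton.1 (hext a (hD.left_subset ha) b (hD.right_subset hb) rfl)
  rcases eq_or_ne t 0 with rfl | ht₀
  · rw [zero_smul] at ht
    simpa [← ht] using Or.inr hb
  · left
    rw [← inv_smul_smul₀ ht₀ (a + b), ht]
    exact smul_mem _ _ (subset_span ha)

end IsDirectDecomposition

theorem WithLp.prod_ext {p : ENNReal} {A B : Type*} {x y : WithLp p (A × B)}
    (h₁ : x.ofLp.1 = y.ofLp.1) (h₂ : x.ofLp.2 = y.ofLp.2) : x = y :=
  WithLp.ofLp_injective p (Prod.ext h₁ h₂)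

namespace PowCone

variable {m n : ℕ} {α : Fin n → ℝ}

def unitVec (m : ℕ) (i : Fin n) : E m n := WithLp.toLp 2 (0, EuclideanSpace.single i 1)

theorem fst_eq_zero_of_snd_eq_zero (hα : ∀ i, 0 < α i) {x : E m n} (hx : x ∈ PowCone m n α)
    {j : Fin n} (hj : x.ofLp.2 j = 0) : x.ofLp.1 = 0 := by
  have hprod : ∏ i, x.ofLp.2 i ^ α i = 0 :=
    Finset.prod_eq_zero (Finset.mem_univ j) (by rw [hj, Real.zero_rpow (hα j).ne'])
  exact norm_le_zero_iff.1 (hprod ▸ hx.2)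

theorem unitVec_mem (i : Fin n) : unitVec m i ∈ PowCone m n α := by
  have hnonneg : ∀ k, 0 ≤ (unitVec m i).ofLp.2 k := fun k => by
    simp only [unitVec, PiLp.single_apply]
    split_ifs <;> norm_num
  refine ⟨hnonneg, ?_⟩
  simpa [unitVec] using Finset.prod_nonneg fun k _ => Real.rpow_nonneg (hnonneg k) (α k)

theorem toLp_neg_fst_mem {x : E m n} (hx : x ∈ PowCone m n α) :
    WithLp.toLp 2 (-x.ofLp.1, x.ofLp.2) ∈ PowCone m n α :=
  ⟨hx.1, by simpa using hx.2⟩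

theorem exists_fst_ne_zero (hm : 0 < m) : ∃ x ∈ PowCone m n α, x.ofLp.1 ≠ 0 := by
  refine ⟨WithLp.toLp 2 (EuclideanSpace.single ⟨0, hm⟩ 1, WithLp.toLp 2 fun _ => 1), ?_, ?_⟩
  · exact ⟨fun _ => zero_le_one, by simp⟩
  · simp

theorem toLp_zero_mem_of_unitVec_mem {S : Submodule ℝ (E m n)} {w : EuclideanSpace ℝ (Fin n)}
    (h : ∀ k, w k ≠ 0 → unitVec m k ∈ S) : WithLp.toLp 2 (0, w) ∈ S := by
  have hw : WithLp.toLp 2 (0, w) = ∑ k, w k • unitVec m k := by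
    refine WithLp.prod_ext ?_ ?_
    · simp [unitVec, WithLp.ofLp_sum, Prod.fst_sum]
    · ext j
      simp [unitVec, WithLp.ofLp_sum, Prod.snd_sum, Pi.single_apply]
  rw [hw]
  refine sum_mem fun k _ => ?_
  rcases eq_or_ne (w k) 0 with hk | hk
  · simp [hk]
  · exact smul_mem _ _ (h k hk)

theorem mem_span_unitVec_of_add_eq (hn : 2 ≤ n) (hα : ∀ i, 0 < α i) {i : Fin n} {u v : E m n}
    (hu : u ∈ PowCone m n α) (hv : v ∈ PowCone m n α) (huv : u + v = unitVec m i) :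
    u ∈ ℝ ∙ unitVec m i := by
  have hoff : ∀ k ≠ i, u.ofLp.2 k = 0 := fun k hk => by
    have hk' := congrArg (fun x : E m n => x.ofLp.2 k) huv
    simp only [WithLp.ofLp_add, Prod.snd_add, PiLp.add_apply, unitVec, PiLp.single_apply,
      if_neg hk] at hk'
    linarith [hu.1 k, hv.1 k]
  have : Nontrivial (Fin n) := Fin.nontrivial_iff_two_le.2 hn
  obtain ⟨k, hk⟩ := exists_ne i
  have hfst := fst_eq_zero_of_snd_eq_zero hα hu (hoff k hk)
  refine mem_span_singleton.2 ⟨u.ofLp.2 i, ?_⟩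
  refine WithLp.prod_ext ?_ ?_
  · rw [hfst]
    simp [unitVec]
  · ext j
    by_cases hj : j = i
    · subst hj; simp [unitVec]
    · rw [hoff j hj]
      simp [unitVec, hj]

theorem unitVec_ne_zero (i : Fin n) : unitVec m i ≠ 0 := fun h => by
  simpa [unitVec] using congrArg (fun x : E m n => x.ofLp.2 i) h

variable {K₁ K₂ : Set (E m n)}

theorem unitVec_mem_span_or (hn : 2 ≤ n) (hα : ∀ i, 0 < α i)
    (hD : IsDirectDecomposition ℝ (PowCone m n α) K₁ K₂) (i : Fin n) :
    unitVec m i ∈ span ℝ K₁ ∨ unitVec m i ∈ span ℝ K₂ :=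
  (hD.mem_span_left_or_mem_right (unitVec_mem i) fun _ hu _ hv huv =>
    mem_span_unitVec_of_add_eq hn hα hu hv huv).imp_right fun h => subset_span h

theorem fst_eq_zero_of_mem_left (hα : ∀ i, 0 < α i)
    (hD : IsDirectDecomposition ℝ (PowCone m n α) K₁ K₂)
    (hcover : ∀ k, unitVec m k ∈ span ℝ K₁ ∨ unitVec m k ∈ span ℝ K₂)
    {j : Fin n} (hj : unitVec m j ∉ span ℝ K₁) {a : E m n} (ha : a ∈ K₁) : a.ofLp.1 = 0 := by
  classical
  have haK := hD.left_subset ha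
  obtain ⟨a', ha', b', hb', hab'⟩ := hD.exists_add_eq (toLp_neg_fst_mem haK)
  set w₁ : EuclideanSpace ℝ (Fin n) := WithLp.toLp 2 fun k =>
    if unitVec m k ∈ span ℝ K₁ then 2 * a.ofLp.2 k else 0
  set w₂ : EuclideanSpace ℝ (Fin n) := WithLp.toLp 2 fun k =>
    if unitVec m k ∈ span ℝ K₁ then 0 else 2 * a.ofLp.2 k
  have hw₁ : WithLp.toLp 2 (0, w₁) ∈ span ℝ K₁ := toLp_zero_mem_of_unitVec_mem fun k hk => by
    by_contra h
    simp [w₁, h] at hk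
  have hw₂ : WithLp.toLp 2 (0, w₂) ∈ span ℝ K₂ := toLp_zero_mem_of_unitVec_mem fun k hk =>
    (hcover k).resolve_left fun h => by simp [w₂, h] at hk
  have hsplit : (a + a') + b' = WithLp.toLp 2 (0, w₁) + WithLp.toLp 2 (0, w₂) := by
    rw [add_assoc, hab']
    refine WithLp.prod_ext ?_ ?_
    · simp
    · ext k
      by_cases hk : unitVec m k ∈ span ℝ K₁ <;> simp [w₁, w₂, hk] <;> ring
  -- `a + (-ā, ã) = (0, w₁) + (0, w₂)` decomposes uniquely, so `a + a' = (0, w₁)`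
  have hsum := congrArg (fun x : E m n => x.ofLp.2 j) (hD.left_eq_of_add_eq_add
    (add_mem (subset_span ha) (subset_span ha')) hw₁ (subset_span hb') hw₂ hsplit)
  simp only [w₁, WithLp.ofLp_add, Prod.snd_add, PiLp.add_apply, if_neg hj] at hsum
  exact fst_eq_zero_of_snd_eq_zero hα haK (by linarith [haK.1 j, (hD.left_subset ha').1 j])

theorem right_eq_zero_of_unitVec_mem_span_left (hn : 0 < n) (hα : ∀ i, 0 < α i)
    (hD : IsDirectDecomposition ℝ (PowCone m n α) K₁ K₂)
    (hall : ∀ k, unitVec m k ∈ span ℝ K₁) : K₂ = {0} := by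
  have hi : unitVec m ⟨0, hn⟩ ∉ span ℝ K₂ := fun h =>
    unitVec_ne_zero _ (disjoint_def.1 hD.disjoint_span _ (hall _) h)
  have hne : (K₁ + K₂).Nonempty := hD.eq_add ▸ ⟨_, unitVec_mem (m := m) (α := α) ⟨0, hn⟩⟩
  refine Set.eq_singleton_iff_nonempty_unique_mem.2 ⟨hne.of_add_right, fun b hb => ?_⟩
  have hb₀ := fst_eq_zero_of_mem_left hα hD.symm (fun k => Or.inr (hall k)) hi hb
  have hb₁ : b ∈ span ℝ K₁ := by
    rw [show b = WithLp.toLp 2 (0, b.ofLp.2) from WithLp.prod_ext hb₀ rfl]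
    exact toLp_zero_mem_of_unitVec_mem fun k _ => hall k
  exact disjoint_def.1 hD.disjoint_span b hb₁ (subset_span hb)

end PowCone

open PowCone

open Pointwise in
theorem powCone_irreducible_general (m n : ℕ) (hm : 1 ≤ m) (hn : 2 ≤ n) (α : Fin n → ℝ)
    (hα : ∀ i, 0 < α i ∧ α i < 1) :
    ¬ ∃ K₁ K₂ : Set (E m n),
        K₁ ⊆ PowCone m n α ∧ K₂ ⊆ PowCone m n α ∧
        K₁ ≠ {0} ∧ K₂ ≠ {0} ∧
        PowCone m n α = K₁ + K₂ ∧
        Submodule.span ℝ K₁ ⊓ Submodule.span ℝ K₂ = ⊥ := by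
  rintro ⟨K₁, K₂, h₁, h₂, hne₁, hne₂, hK, hspan⟩
  have hα₀ : ∀ i, 0 < α i := fun i => (hα i).1
  have hD : IsDirectDecomposition ℝ (PowCone m n α) K₁ K₂ := ⟨h₁, h₂, hK, disjoint_iff.2 hspan⟩
  have hcover := unitVec_mem_span_or hn hα₀ hD
  by_cases hall₁ : ∀ k, unitVec m k ∈ span ℝ K₁
  · exact hne₂ (right_eq_zero_of_unitVec_mem_span_left (by omega) hα₀ hD hall₁)
  by_cases hall₂ : ∀ k, unitVec m k ∈ span ℝ K₂
  · exact hne₁ (right_eq_zero_of_unitVec_mem_span_left (by omega) hα₀ hD.symm hall₂)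
  push Not at hall₁ hall₂
  obtain ⟨j, hj⟩ := hall₁
  obtain ⟨i, hi⟩ := hall₂
  obtain ⟨x, hx, hx₀⟩ := exists_fst_ne_zero (n := n) (α := α) hm
  obtain ⟨a, ha, b, hb, rfl⟩ := hD.exists_add_eq hx
  apply hx₀
  rw [WithLp.ofLp_add, Prod.fst_add, fst_eq_zero_of_mem_left hα₀ hD hcover hj ha,
    fst_eq_zero_of_mem_left hα₀ hD.symm (fun k => (hcover k).symm) hi hb, add_zero]

open Pointwise in
/-- The generalized power cone is irreducible. -/
theorem powCone_irreducible (m n : ℕ) (hm : 1 ≤ m) (hn : 2 ≤ n) (α : Fin n → ℝ)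
    (hα : ∀ i, 0 < α i ∧ α i < 1) (hαsum : ∑ i, α i = 1) :
    ¬ ∃ K₁ K₂ : Set (E m n),
        K₁ ⊆ PowCone m n α ∧ K₂ ⊆ PowCone m n α ∧
        K₁ ≠ {0} ∧ K₂ ≠ {0} ∧
        PowCone m n α = K₁ + K₂ ∧
        Submodule.span ℝ K₁ ⊓ Submodule.span ℝ K₂ = ⊥ :=
  powCone_irreducible_general m n hm hn α hα
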